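/- Let k ≥ 1 and let G be a star of size n ≥ 2 with a marked k-tuple ḡ of pairwise distinct vertices (k ≤ n). Then for every d ≥ 0, any two unmarked vertices of G are ∼_d-equivalent; in particular, if the center is unmarked then the center is ∼_d-equivalent to every unmarked leaf. Consequently, for every d the number of ∼_d-equivalence classes is at most k + 1. -/

import Mathlib

/-! Markings of topologies with a marked k-tuple, following the paper's
`d`-contraction construction. -/

noncomputable def dst {α : Type} (l : List α) : List α :=
  @List.destutter α (· ≠ ·) (fun _ _ => Classical.dec _) l

/-- A topology: a finite nonempty directed graph with no self-loops. -/
structure Topo where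
  V : Type
  fintypeV : Fintype V
  decEqV : DecidableEq V
  nonemptyV : Nonempty V
  E : V → V → Prop
  no_self_loops : ∀ v, ¬ E v v

attribute [instance] Topo.fintypeV Topo.decEqV Topo.nonemptyV

/-- `Mark k d`: the type of `d`-th markings (independent of the topology). -/
def Mark (k : ℕ) : ℕ → Type
  | 0 => Finset (Fin k)
  | d + 1 => Set (List (Mark k d))

def Mark.toSet {k d : ℕ} (m : Mark k (d + 1)) : Set (List (Mark k d)) := m

/-- The labeling `Λ`: `Λ (g i) = {i}` and `Λ v = ∅` for unmarked `v`
(for injective `g`). -/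
def lab {k : ℕ} (G : Topo) (g : Fin k → G.V) (v : G.V) : Finset (Fin k) :=
  Finset.univ.filter fun i => g i = v

/-- `InX G g v π`: `π` is a directed path starting at `v`, ending at a marked
vertex, with all non-final vertices unmarked.  (The set `X(v)` of the paper.) -/
def InX {k : ℕ} (G : Topo) (g : Fin k → G.V) (v : G.V) (π : List G.V) : Prop :=
  π ≠ [] ∧ π.head? = some v ∧ List.Chain' G.E π ∧
    (∀ u ∈ π.dropLast, u ∉ Set.range g) ∧
    ∃ w ∈ Set.range g, π.getLast? = some w

/-- The `d`-th marking `μ_d`. -/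
noncomputable def mu {k : ℕ} (G : Topo) (g : Fin k → G.V) : (d : ℕ) → G.V → Mark k d
  | 0, v => lab G g v
  | d + 1, v => { s : List (Mark k d) | ∃ π : List G.V, InX G g v π ∧ s = dst (π.map (mu G g d)) }

/-- A star of size `n ≥ 2`: the center is `0 : Fin n`, the leaves are the other
vertices; there are edges `(0, l)` and `(l, 0)` for every leaf `l` and no
other edges. -/
def starTopo (n : ℕ) (hn : 2 ≤ n) : Topo :=
  haveI : NeZero n := ⟨by omega⟩
  { V := Fin n
    fintypeV := inferInstance
    decEqV := inferInstance
    nonemptyV := ⟨0⟩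
    E := fun i j => i ≠ j ∧ (i = 0 ∨ j = 0)
    no_self_loops := fun _ h => h.1 rfl }

/-! In a star, a path from an unmarked vertex runs through unmarked vertices to its marked
endpoint, so if all unmarked vertices share the marking `m` at depth `d`, the path contributes
`dst [m, μ_d w]` at depth `d + 1`: only its endpoint `w` matters. Every marked vertex that can
be reached this way from one unmarked vertex can be reached from any other, directly or through
the (then unmarked) center, so by induction on `d` all unmarked vertices stay equivalent, and
there are at most `k` further classes, one per marked vertex. -/

open Set

lemma dst_append_singleton_of_forall_eq {α : Type} {m x : α} {L : List α} (hL : L ≠ [])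
    (h : ∀ a ∈ L, a = m) : dst (L ++ [x]) = dst [m, x] := by
  obtain ⟨a, L, rfl⟩ := List.exists_cons_of_ne_nil hL
  obtain rfl : a = m := h a List.mem_cons_self
  replace h : ∀ b ∈ L, b = a := fun b hb => h b (List.mem_cons_of_mem _ hb)
  unfold dst
  rw [List.cons_append, List.destutter_cons', List.destutter_cons']
  clear hL
  induction L with
  | nil => rfl
  | cons b L ih =>
    obtain rfl : b = a := h b List.mem_cons_self
    rw [List.cons_append, List.destutter'_cons, if_neg (fun hne => hne rfl)]
    exact ih fun c hc => h c (List.mem_cons_of_mem _ hc)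

section Topo

variable {k : ℕ} {G : Topo} {g : Fin k → G.V}

lemma InX.exists_eq_append_singleton {u : G.V} {π : List G.V} (hπ : InX G g u π)
    (hu : u ∉ range g) :
    ∃ p w, p ≠ [] ∧ π = p ++ [w] ∧ (∀ x ∈ p, x ∉ range g) ∧ w ∈ range g := by
  obtain ⟨hne, hhead, -, hdrop, w, hw, hlast⟩ := hπ
  obtain rfl | ⟨p, w', rfl⟩ := π.eq_nil_or_concat'
  · exact absurd rfl hne
  obtain rfl : w = w' := by simpa using hlast.symm
  refine ⟨p, w, ?_, rfl, by simpa using hdrop, hw⟩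
  rintro rfl
  obtain rfl : w = u := by simpa using hhead
  exact hu hw

lemma inX_append_singleton {v w : G.V} {p : List G.V} (hhead : p.head? = some v)
    (hchain : List.IsChain G.E (p ++ [w])) (hun : ∀ x ∈ p, x ∉ range g)
    (hw : w ∈ range g) : InX G g v (p ++ [w]) :=
  ⟨by simp, by simp [hhead], hchain, by simpa using hun, w, hw, by simp⟩

lemma dst_map_mu_append_singleton {d : ℕ} {m : Mark k d}
    (hm : ∀ x ∉ range g, mu G g d x = m) {p : List G.V} (hp : p ≠ [])
    (hpun : ∀ x ∈ p, x ∉ range g) (w : G.V) :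
    dst ((p ++ [w]).map (mu G g d)) = dst [m, mu G g d w] := by
  rw [List.map_append, List.map_singleton]
  refine dst_append_singleton_of_forall_eq (by simpa using hp) ?_
  simp only [List.mem_map]
  rintro _ ⟨x, hx, rfl⟩
  exact hm x (hpun x hx)

lemma mu_succ_subset {d : ℕ} {m : Mark k d} (hm : ∀ x ∉ range g, mu G g d x = m)
    {u v : G.V} (hu : u ∉ range g) (hv : v ∉ range g)
    (hexit : ∀ π, InX G g u π → ∃ π', InX G g v π' ∧ π'.getLast? = π.getLast?) :
    (mu G g (d + 1) u).toSet ⊆ (mu G g (d + 1) v).toSet := by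
  rintro _ ⟨π, hπ, rfl⟩
  obtain ⟨π', hπ', hlast⟩ := hexit π hπ
  obtain ⟨p, w, hp, rfl, hpun, -⟩ := hπ.exists_eq_append_singleton hu
  obtain ⟨p', w', hp', rfl, hp'un, -⟩ := hπ'.exists_eq_append_singleton hv
  obtain rfl : w' = w := by simpa using hlast
  exact ⟨p' ++ [w'], hπ', by
    rw [dst_map_mu_append_singleton hm hp hpun, dst_map_mu_append_singleton hm hp' hp'un]⟩

def UnmarkedExitsAgree (G : Topo) (g : Fin k → G.V) : Prop :=
  ∀ u v, u ∉ range g → v ∉ range g →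
    ∀ π, InX G g u π → ∃ π', InX G g v π' ∧ π'.getLast? = π.getLast?

theorem UnmarkedExitsAgree.mu_eq (h : UnmarkedExitsAgree G g) :
    ∀ d u v, u ∉ range g → v ∉ range g → mu G g d u = mu G g d v
  | 0, u, v, hu, hv => by
    show lab G g u = lab G g v
    ext i
    simp only [lab, Finset.mem_filter, Finset.mem_univ, true_and]
    exact ⟨fun hi => absurd ⟨i, hi⟩ hu, fun hi => absurd ⟨i, hi⟩ hv⟩
  | d + 1, u, v, hu, hv => by
    have hm : ∀ x ∉ range g, mu G g d x = mu G g d u := fun x hx => h.mu_eq d x u hx hu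
    exact Subset.antisymm (mu_succ_subset hm hu hv (h u v hu hv))
      (mu_succ_subset hm hv hu (h v u hv hu))

end Topo

theorem starTopo_unmarkedExitsAgree {k n : ℕ} (hn : 2 ≤ n) (g : Fin k → Fin n) :
    UnmarkedExitsAgree (starTopo n hn) g := by
  have : NeZero n := ⟨by omega⟩
  intro u v hu hv π hπ
  have hchain : List.IsChain (starTopo n hn).E π := hπ.2.2.1
  obtain ⟨p, w, hp, rfl, hpun, hw⟩ := hπ.exists_eq_append_singleton hu
  suffices ∃ π', InX (starTopo n hn) g v π' ∧ π'.getLast? = some w by simpa using this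
  have hvw : v ≠ w := fun h => hv (h ▸ hw)
  by_cases hdirect : v = (0 : Fin n) ∨ w = (0 : Fin n)
  · exact ⟨[v, w], inX_append_singleton (p := [v]) rfl (List.isChain_pair.2 ⟨hvw, hdirect⟩)
      (by simpa using hv) hw, rfl⟩
  obtain ⟨hv0, hw0⟩ := not_or.1 hdirect
  -- a leaf is entered only from the center, so the center lies on `p` and is unmarked
  have hlast : (starTopo n hn).E (p.getLast hp) w :=
    (List.isChain_append.1 hchain).2.2 _ (List.getLast?_eq_some_getLast hp) w rfl
  have h0 : (0 : Fin n) ∉ range g := by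
    have hlast0 : p.getLast hp = (0 : Fin n) := hlast.2.resolve_right hw0
    exact hpun (0 : Fin n) (hlast0 ▸ List.getLast_mem hp)
  exact ⟨[v, (0 : Fin n), w], inX_append_singleton (p := [v, (0 : Fin n)]) rfl
    (List.isChain_cons_cons.2 ⟨⟨hv0, Or.inr rfl⟩, List.isChain_pair.2 ⟨Ne.symm hw0, Or.inl rfl⟩⟩)
    (List.forall_mem_cons.2 ⟨hv, List.forall_mem_singleton.2 h0⟩) hw, rfl⟩

lemma ncard_range_le_succ_of_eq_off_range {α β : Type*} [Finite α] {k : ℕ} (f : α → β)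
    (g : Fin k → α) (h : ∀ u v, u ∉ range g → v ∉ range g → f u = f v) :
    (range f).ncard ≤ k + 1 := by
  have hcover : range f ⊆ range (f ∘ g) ∪ f '' (range g)ᶜ := by
    rintro _ ⟨v, rfl⟩
    by_cases hv : v ∈ range g
    · obtain ⟨i, rfl⟩ := hv
      exact Or.inl ⟨i, rfl⟩
    · exact Or.inr ⟨v, hv, rfl⟩
  have hmarked : (range (f ∘ g)).ncard ≤ k := by
    rw [← image_univ]
    exact (ncard_image_le (toFinite _)).trans (by simp)
  have hunmarked : (f '' (range g)ᶜ).ncard ≤ 1 := by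
    rw [ncard_le_one]
    rintro _ ⟨u, hu, rfl⟩ _ ⟨v, hv, rfl⟩
    exact h u v hu hv
  calc (range f).ncard ≤ (range (f ∘ g) ∪ f '' (range g)ᶜ).ncard := ncard_le_ncard hcover
    _ ≤ (range (f ∘ g)).ncard + (f '' (range g)ᶜ).ncard := ncard_union_le _ _
    _ ≤ k + 1 := add_le_add hmarked hunmarked

/-- in a star of size `n`, any two unmarked vertices are
`∼_d`-equivalent for every `d` (in particular an unmarked center is equivalent
to every unmarked leaf), and there are at most `k + 1` classes of `∼_d`. -/
theorem stmt10 {k n : ℕ} (hn : 2 ≤ n)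
    (g : Fin k → Fin n) (d : ℕ) :
    (∀ u v : Fin n, u ∉ Set.range g → v ∉ Set.range g →
      mu (starTopo n hn) g d u = mu (starTopo n hn) g d v) ∧
    ((⟨0, by omega⟩ : Fin n) ∉ Set.range g →
      ∀ v : Fin n, v ≠ ⟨0, by omega⟩ → v ∉ Set.range g →
        mu (starTopo n hn) g d ⟨0, by omega⟩ = mu (starTopo n hn) g d v) ∧
    (Set.range (mu (starTopo n hn) g d)).ncard ≤ k + 1 := by
  have hunmarked := (starTopo_unmarkedExitsAgree hn g).mu_eq d
  exact ⟨hunmarked, fun h0 v _ hv => hunmarked _ v h0 hv,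
    ncard_range_le_succ_of_eq_off_range _ g hunmarked⟩
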